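/- Let (Ω, ℱ, P) be a probability space, 𝔪 ⊆ ℱ a sub-σ-algebra, Z : Ω → ℝ an integrable random variable independent of 𝔪 whose law has density h with respect to Lebesgue measure, and W : Ω → ℝ an 𝔪-measurable integrable random variable. Then for P-a.e. ω, the function x ↦ x·h(x − W(ω)) is Lebesgue integrable and E[Z + W | 𝔪](ω) = ∫_ℝ x h(x − W(ω)) dx; in particular this integral equals E[Z] + W(ω) a.e. -/

import Mathlib

open MeasureTheory ProbabilityTheory

/-- If `Z` is an integrable random variable independent of a sub-σ-algebra `𝔪`, whose law has
density `h` with respect to Lebesgue measure, and `W` is `𝔪`-measurable and integrable, then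
for a.e. `ω` the function `x ↦ x * h (x - W ω)` is Lebesgue integrable,
`E[Z + W | 𝔪](ω) = ∫ x, x * h (x - W ω) dx`, and this integral equals `E[Z] + W ω`. -/
theorem donsker_delta_shifted_density_mean
    {Ω : Type*} (𝔪 : MeasurableSpace Ω) [mΩ : MeasurableSpace Ω]
    {P : Measure Ω} [IsProbabilityMeasure P] (h𝔪 : 𝔪 ≤ mΩ)
    (Z W : Ω → ℝ) (hZ : Measurable Z) (hZint : Integrable Z P)
    (hW : Measurable[𝔪] W) (hWint : Integrable W P)
    (hindep : Indep (MeasurableSpace.comap Z inferInstance) 𝔪 P)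
    (h : ℝ → ℝ) (hh : Measurable h) (hh0 : ∀ x, 0 ≤ h x)
    (hlaw : Measure.map Z P = volume.withDensity (fun x => ENNReal.ofReal (h x))) :
    ∀ᵐ ω ∂P,
      Integrable (fun x => x * h (x - W ω)) volume ∧
      (P[fun ω' => Z ω' + W ω' | 𝔪]) ω = ∫ x, x * h (x - W ω) ∧
      ∫ x, x * h (x - W ω) = (∫ ω', Z ω' ∂P) + W ω := by
  set f : ℝ → NNReal := fun x => Real.toNNReal (h x) with hf_def
  have hf_meas : Measurable f := hh.real_toNNReal
  have hf_coe : ∀ x, (f x : ℝ) = h x := fun x => Real.coe_toNNReal _ (hh0 x)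
  have hmap : Measure.map Z P = volume.withDensity (fun x => (f x : ENNReal)) := by
    simpa [ENNReal.ofReal] using hlaw
  haveI hμprob : IsProbabilityMeasure (volume.withDensity (fun x => (f x : ENNReal))) := by
    rw [← hmap]; exact Measure.isProbabilityMeasure_map hZ.aemeasurable
  -- h is integrable
  have hint_h : Integrable h volume := by
    have h1 : Integrable (fun _ : ℝ => (1 : ℝ))
        (volume.withDensity (fun x => (f x : ENNReal))) := integrable_const 1
    have := (integrable_withDensity_iff_integrable_smul hf_meas).1 h1
    simpa [NNReal.smul_def, hf_coe] using this
  -- x * h x is integrable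
  have hint_id : Integrable id (Measure.map Z P) :=
    (integrable_map_measure aestronglyMeasurable_id hZ.aemeasurable).2 hZint
  have hint_xh : Integrable (fun x => x * h x) volume := by
    rw [hmap] at hint_id
    have := (integrable_withDensity_iff_integrable_smul hf_meas).1 hint_id
    have h2 : Integrable (fun x : ℝ => h x * x) volume := by simpa [NNReal.smul_def, hf_coe] using this
    simpa [mul_comm] using h2
  -- ∫ h = 1
  have hinth1 : ∫ x, h x = 1 := by
    have := integral_withDensity_eq_integral_smul (μ := volume) hf_meas (fun _ : ℝ => (1 : ℝ))
    have h1 : ∫ _x, (1 : ℝ) ∂(volume.withDensity (fun x => (f x : ENNReal))) = 1 := by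
      simp
    rw [this] at h1
    simpa [NNReal.smul_def, hf_coe] using h1
  -- E[Z] = ∫ x * h x
  have hEZ : ∫ ω', Z ω' ∂P = ∫ x, x * h x := by
    have h1 : ∫ ω', Z ω' ∂P = ∫ x, x ∂(Measure.map Z P) :=
      (integral_map hZ.aemeasurable aestronglyMeasurable_id).symm
    rw [h1, hmap, integral_withDensity_eq_integral_smul hf_meas]
    simp only [NNReal.smul_def, hf_coe]
    simp [mul_comm]
  -- deterministic statements for each w
  have hkey : ∀ w : ℝ, Integrable (fun x => x * h (x - w)) volume ∧
      ∫ x, x * h (x - w) = (∫ ω', Z ω' ∂P) + w := by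
    intro w
    have hint : Integrable (fun y => (y + w) * h y) volume := by
      have := hint_xh.add (hint_h.const_mul w)
      simpa [add_mul, Pi.add_def] using this
    have hshift : Integrable (fun x => x * h (x - w)) volume := by
      have := hint.comp_sub_right w
      simpa [sub_add_cancel] using this
    refine ⟨hshift, ?_⟩
    have h1 : ∫ x, x * h (x - w) = ∫ y, (y + w) * h y := by
      rw [← integral_sub_right_eq_self (fun y => (y + w) * h y) w]
      simp [sub_add_cancel]
    rw [h1]
    have h2 : ∫ y, (y + w) * h y = (∫ y, y * h y) + w * ∫ y, h y := by
      rw [← integral_const_mul, ← integral_add hint_xh (hint_h.const_mul w)]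
      congr 1; ext y; ring
    rw [h2, hinth1, hEZ, mul_one]
  -- conditional expectation
  haveI : SigmaFinite (P.trim h𝔪) := by
    have : IsFiniteMeasure (P.trim h𝔪) := isFiniteMeasure_trim h𝔪
    infer_instance
  have hZmeas : StronglyMeasurable[MeasurableSpace.comap Z inferInstance] Z :=
    (Measurable.of_comap_le le_rfl).stronglyMeasurable
  have h1 : P[Z|𝔪] =ᵐ[P] fun _ => ∫ ω', Z ω' ∂P :=
    condExp_indep_eq hZ.comap_le h𝔪 hZmeas hindep
  have h2 : P[W|𝔪] = W := condExp_of_stronglyMeasurable h𝔪 hW.stronglyMeasurable hWint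
  have h3 : P[fun ω' => Z ω' + W ω'|𝔪] =ᵐ[P] P[Z|𝔪] + P[W|𝔪] := condExp_add hZint hWint 𝔪
  filter_upwards [h1, h3] with ω hω1 hω3
  refine ⟨(hkey (W ω)).1, ?_, (hkey (W ω)).2⟩
  rw [hω3]
  simp only [Pi.add_apply, hω1, h2]
  exact ((hkey (W ω)).2).symm
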